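/- arXiv:2007.02746 — 4 statements merged into one kernel-verified Lean document; each statement's English description precedes it below -/
import Mathlib

section
/- Let H be a real Hilbert space, let S: H → H be k-Lipschitz continuous and η-strongly monotone with 0 < η ≤ k, and let U: H → H be nonexpansive. Then for any σ > 0 with σ < 2η/k² and all x, y ∈ H, ‖(Ux − σS(Ux)) − (Uy − σS(Uy))‖ ≤ √(1 − σ(2η − σk²)) · ‖x − y‖. -/
open Filter Topology RealInnerProductSpace Set

/-- Inside Lemma 2.1: `U − σS∘U` is a `√(1 − σ(2η − σk²))`-contraction. -/
theorem stmt_1 {H : Type*} [NormedAddCommGroup H] [InnerProductSpace ℝ H]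
    (S U : H → H) (k η : ℝ)
    (hSLip : ∀ x y : H, ‖S x - S y‖ ≤ k * ‖x - y‖)
    (hSmono : ∀ x y : H, η * ‖x - y‖ ^ 2 ≤ ⟪S x - S y, x - y⟫)
    (hη : 0 < η) (hηk : η ≤ k)
    (hU : ∀ x y : H, ‖U x - U y‖ ≤ ‖x - y‖) :
    ∀ σ : ℝ, 0 < σ → σ < 2 * η / k ^ 2 → ∀ x y : H,
      ‖(U x - σ • S (U x)) - (U y - σ • S (U y))‖ ≤
        Real.sqrt (1 - σ * (2 * η - σ * k ^ 2)) * ‖x - y‖ := by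
  intro σ hσ hσ2 x y
  set a := U x - U y with ha
  set b := S (U x) - S (U y) with hb
  have hrw : (U x - σ • S (U x)) - (U y - σ • S (U y)) = a - σ • b := by
    simp [ha, hb, smul_sub]; abel
  have hk : 0 < k := lt_of_lt_of_le hη hηk
  have hcoef : 0 ≤ 1 - σ * (2 * η - σ * k ^ 2) := by
    have h1 : (1 - σ * k) ^ 2 ≥ 0 := sq_nonneg _
    nlinarith [sq_nonneg (1 - σ * k), mul_nonneg hσ.le (sub_nonneg.mpr hηk)]
  have hsq : ‖a - σ • b‖ ^ 2 ≤ (1 - σ * (2 * η - σ * k ^ 2)) * ‖x - y‖ ^ 2 := by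
    have hexp : ‖a - σ • b‖ ^ 2 = ‖a‖ ^ 2 - 2 * σ * ⟪b, a⟫ + σ ^ 2 * ‖b‖ ^ 2 := by
      rw [norm_sub_sq_real, norm_smul, real_inner_smul_right, real_inner_comm]
      simp [mul_pow, abs_of_pos hσ]; ring
    have h1 : η * ‖a‖ ^ 2 ≤ ⟪b, a⟫ := hSmono (U x) (U y)
    have h2 : ‖b‖ ≤ k * ‖a‖ := hSLip (U x) (U y)
    have h3 : ‖a‖ ≤ ‖x - y‖ := hU x y
    have hb2 : ‖b‖ ^ 2 ≤ k ^ 2 * ‖a‖ ^ 2 := by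
      have := mul_self_le_mul_self (norm_nonneg b) h2
      nlinarith
    have step : ‖a - σ • b‖ ^ 2 ≤ (1 - σ * (2 * η - σ * k ^ 2)) * ‖a‖ ^ 2 := by
      rw [hexp]; nlinarith [sq_nonneg σ]
    calc ‖a - σ • b‖ ^ 2 ≤ (1 - σ * (2 * η - σ * k ^ 2)) * ‖a‖ ^ 2 := step
      _ ≤ (1 - σ * (2 * η - σ * k ^ 2)) * ‖x - y‖ ^ 2 := by
          apply mul_le_mul_of_nonneg_left _ hcoef
          exact pow_le_pow_left₀ (norm_nonneg a) h3 2
  rw [hrw]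
  have := Real.sqrt_le_sqrt hsq
  rwa [Real.sqrt_sq (norm_nonneg _), Real.sqrt_mul hcoef, Real.sqrt_sq (norm_nonneg _)] at this
end

section
/- Let H be a real Hilbert space, C ⊆ H nonempty closed convex, and A: H → H monotone. Let x† ∈ C satisfy ⟨Ax†, x − x†⟩ ≥ 0 for all x ∈ C. Let u ∈ H, ψ > 0, ψ' > 0, φ ∈ (0,1). Let y = P_C(u − ψAu), let H_half = {x ∈ H : ⟨u − ψAu − y, x − y⟩ ≤ 0}, and let z = P_{H_half}(u − ψAy). Assume ψ'‖Au − Ay‖ ≤ φ‖u − y‖. Then ‖z − x†‖² ≤ ‖u − x†‖² − (1 − φψ/ψ')‖y − u‖² − (1 − φψ/ψ')‖z − y‖². -/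
open Filter Topology RealInnerProductSpace Set

set_option maxHeartbeats 1000000 in
/-- Lemma 3.2: one step of the subgradient extragradient method. Here `y = P_C(u − ψAu)`
and `z = P_{H_half}(u − ψAy)` are encoded by their variational characterizations, where
`H_half = {x : ⟪u − ψAu − y, x − y⟫ ≤ 0}`. -/
theorem stmt_5 {H : Type*} [NormedAddCommGroup H] [InnerProductSpace ℝ H]
    (C : Set H) (hCne : C.Nonempty) (hCc : IsClosed C) (hCv : Convex ℝ C)
    (A : H → H) (hAmono : ∀ x y : H, 0 ≤ ⟪A x - A y, x - y⟫)
    (xd : H) (hxdC : xd ∈ C) (hVI : ∀ w ∈ C, 0 ≤ ⟪A xd, w - xd⟫)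
    (u y z : H) (ψ ψ' φ : ℝ)
    (hψ : 0 < ψ) (hψ' : 0 < ψ') (hφ : φ ∈ Set.Ioo (0 : ℝ) 1)
    (hyC : y ∈ C)
    (hy : ∀ w ∈ C, ⟪(u - ψ • A u) - y, w - y⟫ ≤ 0)
    (hzmem : ⟪u - ψ • A u - y, z - y⟫ ≤ 0)
    (hz : ∀ w : H, ⟪u - ψ • A u - y, w - y⟫ ≤ 0 →
      ⟪(u - ψ • A y) - z, w - z⟫ ≤ 0)
    (hstep : ψ' * ‖A u - A y‖ ≤ φ * ‖u - y‖) :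
    ‖z - xd‖ ^ 2 ≤ ‖u - xd‖ ^ 2 - (1 - φ * ψ / ψ') * ‖y - u‖ ^ 2
      - (1 - φ * ψ / ψ') * ‖z - y‖ ^ 2 := by
  obtain ⟨hφ0, hφ1⟩ := hφ
  -- xd lies in the half-space
  have h1 : ⟪(u - ψ • A y) - z, xd - z⟫ ≤ 0 := hz xd (hy xd hxdC)
  have hmono : (0:ℝ) ≤ ⟪A y - A xd, y - xd⟫ := hAmono y xd
  have hvi : (0:ℝ) ≤ ⟪A xd, y - xd⟫ := hVI y hyC
  -- ⟪A y, xd - y⟫ ≤ 0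
  have h2 : ⟪A y, xd - y⟫ ≤ 0 := by
    have e : ⟪A y, y - xd⟫ = ⟪A y - A xd, y - xd⟫ + ⟪A xd, y - xd⟫ := by
      rw [inner_sub_left]; ring
    have e2 : ⟪A y, xd - y⟫ = -⟪A y, y - xd⟫ := by
      rw [← inner_neg_right]; congr 1; abel
    linarith
  -- expand h1
  have h1' : ⟪u - z, xd - z⟫ - ψ * ⟪A y, xd - z⟫ ≤ 0 := by
    have e : (u - ψ • A y) - z = (u - z) - ψ • A y := by abel
    rw [e, inner_sub_left, real_inner_smul_left] at h1
    linarith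
  have hsplit : ⟪A y, xd - z⟫ = ⟪A y, xd - y⟫ + ⟪A y, y - z⟫ := by
    rw [← inner_add_right]; congr 1; abel
  have key1 : ⟪u - z, xd - z⟫ ≤ ψ * ⟪A y, y - z⟫ := by
    nlinarith [mul_nonpos_of_nonneg_of_nonpos hψ.le h2]
  -- hzmem rewritten
  have hzmem' : ⟪y - u, y - z⟫ + ψ * ⟪A u, y - z⟫ ≤ 0 := by
    have e : u - ψ • A u - y = -((y - u) + ψ • A u) := by abel
    rw [e, inner_neg_left] at hzmem
    have e2 : z - y = -(y - z) := by abel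
    rw [e2, inner_neg_right, inner_add_left, real_inner_smul_left] at hzmem
    linarith
  -- Cauchy–Schwarz
  have hcs : ⟪A y - A u, y - z⟫ ≤ ‖A u - A y‖ * ‖y - z‖ := by
    calc ⟪A y - A u, y - z⟫ ≤ ‖A y - A u‖ * ‖y - z‖ := real_inner_le_norm _ _
      _ = ‖A u - A y‖ * ‖y - z‖ := by rw [norm_sub_rev]
  have hsplit2 : ⟪A y, y - z⟫ = ⟪A y - A u, y - z⟫ + ⟪A u, y - z⟫ := by
    rw [inner_sub_left]; ring
  -- combined: ψ⟪Ay, y-z⟫ - ⟪u-y, y-z⟫ ≤ ψ‖Au-Ay‖‖y-z‖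
  have key2 : ψ * ⟪A y, y - z⟫ - ⟪u - y, y - z⟫ ≤ ψ * (‖A u - A y‖ * ‖y - z‖) := by
    have e : ⟪u - y, y - z⟫ = -⟪y - u, y - z⟫ := by
      rw [← inner_neg_left]; congr 1; abel
    nlinarith
  -- norm identities
  have e1 : ‖u - xd‖ ^ 2 = ‖u - z‖ ^ 2 + 2 * ⟪u - z, z - xd⟫ + ‖z - xd‖ ^ 2 := by
    have := norm_add_sq_real (u - z) (z - xd)
    have e : (u - z) + (z - xd) = u - xd := by abel
    rw [e] at this; linarith
  have e1' : ⟪u - z, xd - z⟫ = -⟪u - z, z - xd⟫ := by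
    rw [← inner_neg_right]; congr 1; abel
  have e2 : ‖u - z‖ ^ 2 = ‖u - y‖ ^ 2 + 2 * ⟪u - y, y - z⟫ + ‖y - z‖ ^ 2 := by
    have := norm_add_sq_real (u - y) (y - z)
    have e : (u - y) + (y - z) = u - z := by abel
    rw [e] at this; linarith
  have eyu : ‖y - u‖ = ‖u - y‖ := norm_sub_rev _ _
  have ezy : ‖z - y‖ = ‖y - z‖ := by rw [norm_sub_rev]
  rw [eyu, ezy]
  -- bound ψ‖Au-Ay‖‖y-z‖ ≤ (φψ/ψ')‖u-y‖‖y-z‖ ≤ (φψ/(2ψ'))(‖u-y‖²+‖y-z‖²)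
  have hb1 : ψ * (‖A u - A y‖ * ‖y - z‖) ≤ (ψ / ψ') * (φ * ‖u - y‖ * ‖y - z‖) := by
    have h := mul_le_mul_of_nonneg_right hstep (norm_nonneg (y - z))
    have hψψ' : 0 ≤ ψ / ψ' := by positivity
    have := mul_le_mul_of_nonneg_left h hψψ'
    have hfield : ψ / ψ' * (ψ' * ‖A u - A y‖ * ‖y - z‖) = ψ * (‖A u - A y‖ * ‖y - z‖) := by
      field_simp
    nlinarith
  have hb2 : (ψ / ψ') * (φ * ‖u - y‖ * ‖y - z‖)
      ≤ φ * ψ / ψ' * ((‖u - y‖ ^ 2 + ‖y - z‖ ^ 2) / 2) := by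
    have hsq : 2 * (‖u - y‖ * ‖y - z‖) ≤ ‖u - y‖ ^ 2 + ‖y - z‖ ^ 2 := by
      nlinarith [sq_nonneg (‖u - y‖ - ‖y - z‖)]
    have hc : 0 ≤ φ * ψ / ψ' := by positivity
    have h3 : φ * ψ / ψ' * (2 * (‖u - y‖ * ‖y - z‖))
        ≤ φ * ψ / ψ' * (‖u - y‖ ^ 2 + ‖y - z‖ ^ 2) := mul_le_mul_of_nonneg_left hsq hc
    calc ψ / ψ' * (φ * ‖u - y‖ * ‖y - z‖)
        = φ * ψ / ψ' * (2 * (‖u - y‖ * ‖y - z‖)) / 2 := by ring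
      _ ≤ φ * ψ / ψ' * (‖u - y‖ ^ 2 + ‖y - z‖ ^ 2) / 2 := by linarith
      _ = φ * ψ / ψ' * ((‖u - y‖ ^ 2 + ‖y - z‖ ^ 2) / 2) := by ring
  linarith [key1, key2, hb1, hb2, e1, e1', e2]
end

section
/- Let H be a real Hilbert space, C ⊆ H nonempty closed convex, and A: H → H monotone. Let x† ∈ C satisfy ⟨Ax†, x − x†⟩ ≥ 0 for all x ∈ C. Let u ∈ H, ψ > 0, ψ' > 0, φ ∈ (0,1). Let y = P_C(u − ψAu) and z = y − ψ(Ay − Au). Assume ψ'‖Au − Ay‖ ≤ φ‖u − y‖. Then ‖z − x†‖² ≤ ‖u − x†‖² − (1 − φ²ψ²/ψ'²)‖u − y‖². -/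
open Filter Topology RealInnerProductSpace Set

/-- Lemma 4.1 (first part): one step of Tseng's extragradient method, where
`y = P_C(u − ψAu)` is encoded by its variational characterization and
`z = y − ψ(Ay − Au)`. -/
theorem stmt_6 {H : Type*} [NormedAddCommGroup H] [InnerProductSpace ℝ H]
    (C : Set H) (hCne : C.Nonempty) (hCc : IsClosed C) (hCv : Convex ℝ C)
    (A : H → H) (hAmono : ∀ x y : H, 0 ≤ ⟪A x - A y, x - y⟫)
    (xd : H) (hxdC : xd ∈ C) (hVI : ∀ w ∈ C, 0 ≤ ⟪A xd, w - xd⟫)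
    (u y z : H) (ψ ψ' φ : ℝ)
    (hψ : 0 < ψ) (hψ' : 0 < ψ') (hφ : φ ∈ Set.Ioo (0 : ℝ) 1)
    (hyC : y ∈ C)
    (hy : ∀ w ∈ C, ⟪(u - ψ • A u) - y, w - y⟫ ≤ 0)
    (hz : z = y - ψ • (A y - A u))
    (hstep : ψ' * ‖A u - A y‖ ≤ φ * ‖u - y‖) :
    ‖z - xd‖ ^ 2 ≤ ‖u - xd‖ ^ 2 - (1 - φ ^ 2 * ψ ^ 2 / ψ' ^ 2) * ‖u - y‖ ^ 2 := by
  subst hz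
  have h1 : ⟪(u - ψ • A u) - y, xd - y⟫ ≤ 0 := hy xd hxdC
  have h2 : 0 ≤ ⟪A y - A xd, y - xd⟫ := hAmono y xd
  have h3 : 0 ≤ ⟪A xd, y - xd⟫ := hVI y hyC
  have key : ‖(y - ψ • (A y - A u)) - xd‖ ^ 2
      = ‖u - xd‖ ^ 2 - ‖u - y‖ ^ 2 + ψ ^ 2 * ‖A y - A u‖ ^ 2
        + 2 * ⟪(u - ψ • A u) - y, xd - y⟫
        - 2 * ψ * (⟪A y - A xd, y - xd⟫ + ⟪A xd, y - xd⟫) := by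
    simp only [← real_inner_self_eq_norm_sq]
    simp only [inner_sub_left, inner_sub_right, real_inner_smul_left, real_inner_smul_right]
    ring_nf
    linear_combination (-1 : ℝ) * real_inner_comm u y + real_inner_comm u xd -
      real_inner_comm y xd - ψ * real_inner_comm (A y) y +
      ψ * real_inner_comm (A y) xd + ψ * real_inner_comm (A u) y -
      ψ * real_inner_comm (A u) xd
  have hb : ψ * ‖A y - A u‖ ≤ (φ * ψ / ψ') * ‖u - y‖ := by
    rw [norm_sub_rev]
    rw [div_mul_eq_mul_div, le_div_iff₀ hψ']
    nlinarith [norm_nonneg (A u - A y), norm_nonneg (u - y)]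
  have hb2 : ψ ^ 2 * ‖A y - A u‖ ^ 2 ≤ φ ^ 2 * ψ ^ 2 / ψ' ^ 2 * ‖u - y‖ ^ 2 := by
    have ha : 0 ≤ ψ * ‖A y - A u‖ := mul_nonneg hψ.le (norm_nonneg _)
    have := mul_self_le_mul_self ha hb
    calc ψ ^ 2 * ‖A y - A u‖ ^ 2 = (ψ * ‖A y - A u‖) * (ψ * ‖A y - A u‖) := by ring
      _ ≤ (φ * ψ / ψ' * ‖u - y‖) * (φ * ψ / ψ' * ‖u - y‖) := this
      _ = φ ^ 2 * ψ ^ 2 / ψ' ^ 2 * ‖u - y‖ ^ 2 := by field_simp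
  rw [key]
  nlinarith [mul_nonneg hψ.le h2, mul_nonneg hψ.le h3]
end

section
/- Under Conditions (C1)–(C5) and with the sequences {x^k}, {u^k}, {y^k}, {z^k}, {q^k}, {ψ_k}, {ξ_k} generated by the inertial subgradient extragradient algorithm (u^k = x^k + ξ_k(x^k − x^{k−1}); y^k = P_C(u^k − ψ_k Au^k); z^k = P_{H_k}(u^k − ψ_k Ay^k) with H_k = {x : ⟨u^k − ψ_k Au^k − y^k, x − y^k⟩ ≤ 0}; q^k = (1 − φ_k)z^k + φ_k Tz^k; x^{k+1} = q^k − σθ_k S(q^k); ξ_k = min{ζ_k/‖x^k − x^{k−1}‖, ξ} if x^k ≠ x^{k−1}, else ξ; ψ_{k+1} = min{φ‖u^k − y^k‖/‖Au^k − Ay^k‖, ψ_k} if Au^k ≠ Ay^k, else ψ_k), the sequence {x^k} is bounded; in fact ‖x^{k+1} − x†‖ ≤ max{‖x^{k_0} − x†‖, (σ‖Sx†‖ + Q_1)/γ} for all k ≥ k_0, where x† ∈ Ω ∩ Γ, γ = 1 − √(1 − σ(2η − σk²)), Q_1 is any bound on (ξ_k/θ_k)‖x^k − x^{k−1}‖,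 and k_0 is such that 1 − φψ_k/ψ_{k+1} > 0 for k ≥ k_0. -/
open Filter Topology RealInnerProductSpace Set

set_option maxHeartbeats 2000000 in
/-- Claim 1 in Theorem 3.1: the iterates of Algorithm 1 are bounded; in fact
`‖x^{k+1} − x†‖ ≤ max{‖x^{k₀} − x†‖, (σ‖Sx†‖ + Q₁)/γ}` for all `k ≥ k₀`. -/
theorem stmt_13 {H : Type*} [NormedAddCommGroup H] [InnerProductSpace ℝ H]
    [CompleteSpace H]
    (C : Set H) (hCne : C.Nonempty) (hCc : IsClosed C) (hCv : Convex ℝ C)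
    (A T S : H → H) (L ϑ η k : ℝ)
    -- (C1) A is monotone and L-Lipschitz continuous
    (hAmono : ∀ x y : H, 0 ≤ ⟪A x - A y, x - y⟫)
    (hL : 0 < L) (hALip : ∀ x y : H, ‖A x - A y‖ ≤ L * ‖x - y‖)
    -- (C2) T is ϑ-demicontractive and I − T is demiclosed at zero
    (hϑ0 : 0 ≤ ϑ) (hϑ1 : ϑ < 1)
    (hTdem : ∀ x p : H, T p = p → ‖T x - p‖ ^ 2 ≤ ‖x - p‖ ^ 2 + ϑ * ‖x - T x‖ ^ 2)
    (hTdemicl : ∀ (v : ℕ → H) (v₀ : H),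
      (∀ w : H, Tendsto (fun n => ⟪v n, w⟫) atTop (nhds ⟪v₀, w⟫)) →
      Tendsto (fun n => ‖v n - T (v n)‖) atTop (nhds 0) → T v₀ = v₀)
    -- the solution set Sol = Ω ∩ Γ
    (Sol : Set H)
    (hSolDef : Sol = {p : H | p ∈ C ∧ (∀ v ∈ C, 0 ≤ ⟪A p, v - p⟫) ∧ T p = p})
    -- (C3) Ω ∩ Γ ≠ ∅
    (hSolne : Sol.Nonempty)
    -- (C4) S is η-strongly monotone and k-Lipschitz continuous
    (hη : 0 < η) (hηk : η ≤ k)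
    (hSmono : ∀ x y : H, η * ‖x - y‖ ^ 2 ≤ ⟪S x - S y, x - y⟫)
    (hSLip : ∀ x y : H, ‖S x - S y‖ ≤ k * ‖x - y‖)
    -- (C5) the parameter sequences
    (θ ζ φseq : ℕ → ℝ) (a : ℝ) (ha : 0 < a)
    (hζ : ∀ n, 0 < ζ n)
    (hζθ : Tendsto (fun n => ζ n / θ n) atTop (nhds 0))
    (hθmem : ∀ n, θ n ∈ Set.Ioo (0 : ℝ) 1)
    (hθsum : Tendsto (fun n => ∑ i ∈ Finset.range n, θ i) atTop atTop)
    (hθ0 : Tendsto θ atTop (nhds 0))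
    (hφseq : ∀ n, φseq n ∈ Set.Ioo a (1 - ϑ))
    -- fixed parameters
    (ξ φ σ : ℝ) (hξ : 0 < ξ) (hφ : φ ∈ Set.Ioo (0 : ℝ) 1)
    (hσ : σ ∈ Set.Ioo (0 : ℝ) (2 * η / k ^ 2))
    -- the iterates of Algorithm 1
    (x u y z q : ℕ → H) (ψ ξseq : ℕ → ℝ)
    (hψ1 : 0 < ψ 1)
    (hξ1 : ∀ n, 1 ≤ n → x n ≠ x (n - 1) →
      ξseq n = min (ζ n / ‖x n - x (n - 1)‖) ξ)
    (hξ2 : ∀ n, 1 ≤ n → x n = x (n - 1) → ξseq n = ξ)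
    (hu : ∀ n, 1 ≤ n → u n = x n + ξseq n • (x n - x (n - 1)))
    (hymem : ∀ n, 1 ≤ n → y n ∈ C)
    (hy : ∀ n, 1 ≤ n → ∀ w ∈ C, ⟪(u n - ψ n • A (u n)) - y n, w - y n⟫ ≤ 0)
    (hzmem : ∀ n, 1 ≤ n → ⟪u n - ψ n • A (u n) - y n, z n - y n⟫ ≤ 0)
    (hz : ∀ n, 1 ≤ n → ∀ w : H, ⟪u n - ψ n • A (u n) - y n, w - y n⟫ ≤ 0 →
      ⟪(u n - ψ n • A (y n)) - z n, w - z n⟫ ≤ 0)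
    (hq : ∀ n, 1 ≤ n → q n = (1 - φseq n) • z n + φseq n • T (z n))
    (hx : ∀ n, 1 ≤ n → x (n + 1) = q n - (σ * θ n) • S (q n))
    (hψr1 : ∀ n, 1 ≤ n → A (u n) ≠ A (y n) →
      ψ (n + 1) = min (φ * ‖u n - y n‖ / ‖A (u n) - A (y n)‖) (ψ n))
    (hψr2 : ∀ n, 1 ≤ n → A (u n) = A (y n) → ψ (n + 1) = ψ n)
    (xd : H) (hxd : xd ∈ Sol)
    (Q1 : ℝ) (hQ1 : ∀ n, 1 ≤ n → ξseq n / θ n * ‖x n - x (n - 1)‖ ≤ Q1)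
    (k0 : ℕ) (hk01 : 1 ≤ k0)
    (hk0 : ∀ n, k0 ≤ n → 0 < 1 - φ * ψ n / ψ (n + 1))
    (γ : ℝ) (hγ : γ = 1 - Real.sqrt (1 - σ * (2 * η - σ * k ^ 2)))
    :
    (∃ M : ℝ, ∀ n : ℕ, ‖x n‖ ≤ M) ∧
      ∀ n, k0 ≤ n → ‖x (n + 1) - xd‖ ≤ max ‖x k0 - xd‖ ((σ * ‖S xd‖ + Q1) / γ) := by
  obtain ⟨hxdC, hxdΩ, hxdT⟩ : xd ∈ C ∧ (∀ v ∈ C, 0 ≤ ⟪A xd, v - xd⟫) ∧ T xd = xd := by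
    rw [hSolDef] at hxd; exact hxd
  obtain ⟨hσ0, hσ2⟩ := hσ
  obtain ⟨hφ0, hφ1⟩ := hφ
  have hkpos : 0 < k := lt_of_lt_of_le hη hηk
  have hσk2 : σ * k ^ 2 < 2 * η :=
    (lt_div_iff₀ (by positivity : (0:ℝ) < k ^ 2)).mp hσ2
  -- properties of γ
  have hc0 : 0 < σ * (2 * η - σ * k ^ 2) := mul_pos hσ0 (by linarith only [hσk2])
  have harg0 : (0:ℝ) ≤ 1 - σ * (2 * η - σ * k ^ 2) := by
    linarith only [sq_nonneg (1 - σ * k), mul_le_mul_of_nonneg_left hηk hσ0.le]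
  have hs0 : 0 ≤ Real.sqrt (1 - σ * (2 * η - σ * k ^ 2)) := Real.sqrt_nonneg _
  have hs2 : Real.sqrt (1 - σ * (2 * η - σ * k ^ 2)) ^ 2 = 1 - σ * (2 * η - σ * k ^ 2) :=
    Real.sq_sqrt harg0
  have hs1 : Real.sqrt (1 - σ * (2 * η - σ * k ^ 2)) < 1 := by
    nlinarith only [hs0, hs2, hc0]
  have hγ0 : 0 < γ := by rw [hγ]; linarith only [hs1]
  have hγ1 : γ ≤ 1 := by rw [hγ]; linarith only [hs0]
  have hγσk : γ ≤ σ * k := by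
    have h1 : (1 - σ * k) ^ 2 ≤ 1 - σ * (2 * η - σ * k ^ 2) := by
      linarith only [mul_le_mul_of_nonneg_left hηk hσ0.le, sq_nonneg (1 - σ * k)]
    have h2 := Real.sqrt_le_sqrt h1
    rw [Real.sqrt_sq_eq_abs] at h2
    have h3 := le_abs_self (1 - σ * k)
    rw [hγ]; linarith only [h2, h3]
  have hγ2 : γ ^ 2 - 2 * γ + σ * (2 * η - σ * k ^ 2) = 0 := by
    have h : 1 - γ = Real.sqrt (1 - σ * (2 * η - σ * k ^ 2)) := by rw [hγ]; ring
    rw [← h] at hs2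
    linarith only [hs2, sq_nonneg γ, sq_nonneg (1 - γ)]
  -- contraction scalar inequality
  have key : ∀ t : ℝ, 0 ≤ t → t ≤ 1 →
      1 - 2 * (σ * t) * η + (σ * t) ^ 2 * k ^ 2 ≤ (1 - t * γ) ^ 2 := by
    intro t ht0 ht1
    have H : 0 ≤ t * (1 - t) * ((σ * k - γ) * (σ * k + γ)) := by
      have h0 : 0 < σ * k := mul_pos hσ0 hkpos
      have h1 : 0 ≤ σ * k + γ := by linarith only [h0, hγ0]
      have h2 : 0 ≤ σ * k - γ := by linarith only [hγσk]
      have h3 : 0 ≤ t * (1 - t) := mul_nonneg ht0 (by linarith only [ht1])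
      exact mul_nonneg h3 (mul_nonneg h2 h1)
    have h0t : t * (γ ^ 2 - 2 * γ + σ * (2 * η - σ * k ^ 2)) = 0 := by rw [hγ2]; ring
    linarith only [H, h0t, ht0, ht1]
  -- positivity of ψ
  have hψpos : ∀ n, 1 ≤ n → 0 < ψ n := by
    intro n hn
    refine Nat.le_induction hψ1 (fun m hm ih => ?_) n hn
    by_cases hA : A (u m) = A (y m)
    · rw [hψr2 m hm hA]; exact ih
    · rw [hψr1 m hm hA]
      have h1 : 0 < ‖A (u m) - A (y m)‖ := by rwa [norm_pos_iff, sub_ne_zero]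
      have h2 : 0 < ‖u m - y m‖ := by
        rw [norm_pos_iff, sub_ne_zero]; intro h; exact hA (by rw [h])
      exact lt_min (by positivity) ih
  have hψkey : ∀ n, 1 ≤ n → ψ (n + 1) * ‖A (u n) - A (y n)‖ ≤ φ * ‖u n - y n‖ := by
    intro n hn
    by_cases hA : A (u n) = A (y n)
    · rw [hA]; simp; positivity
    · rw [hψr1 n hn hA]
      have h1 : 0 < ‖A (u n) - A (y n)‖ := by rwa [norm_pos_iff, sub_ne_zero]
      calc min (φ * ‖u n - y n‖ / ‖A (u n) - A (y n)‖) (ψ n) * ‖A (u n) - A (y n)‖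
          ≤ (φ * ‖u n - y n‖ / ‖A (u n) - A (y n)‖) * ‖A (u n) - A (y n)‖ :=
            mul_le_mul_of_nonneg_right (min_le_left _ _) (norm_nonneg _)
        _ = φ * ‖u n - y n‖ := div_mul_cancel₀ _ h1.ne'
  -- ξseq positive
  have hξpos : ∀ n, 1 ≤ n → 0 < ξseq n := by
    intro n hn
    by_cases hxx : x n = x (n - 1)
    · rw [hξ2 n hn hxx]; exact hξ
    · rw [hξ1 n hn hxx]
      refine lt_min (div_pos (hζ n) ?_) hξ
      rwa [norm_pos_iff, sub_ne_zero]
  have hQ10 : 0 ≤ Q1 := by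
    refine le_trans ?_ (hQ1 1 le_rfl)
    exact mul_nonneg (div_nonneg (hξpos 1 le_rfl).le (hθmem 1).1.le) (norm_nonneg _)
  -- Step: ‖u n − xd‖ ≤ ‖x n − xd‖ + θ n * Q1
  have hstep3 : ∀ n, 1 ≤ n → ‖u n - xd‖ ≤ ‖x n - xd‖ + θ n * Q1 := by
    intro n hn
    have hθn := (hθmem n).1
    have h1 : ‖u n - xd‖ ≤ ‖x n - xd‖ + ‖ξseq n • (x n - x (n - 1))‖ := by
      rw [hu n hn]
      have : x n + ξseq n • (x n - x (n - 1)) - xd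
          = (x n - xd) + ξseq n • (x n - x (n - 1)) := by abel
      rw [this]; exact norm_add_le _ _
    have h2 : ‖ξseq n • (x n - x (n - 1))‖ = ξseq n * ‖x n - x (n - 1)‖ := by
      rw [norm_smul, Real.norm_eq_abs, abs_of_pos (hξpos n hn)]
    have h3 : ξseq n * ‖x n - x (n - 1)‖ ≤ θ n * Q1 := by
      have h4 := mul_le_mul_of_nonneg_left (hQ1 n hn) hθn.le
      have h5 : θ n * (ξseq n / θ n * ‖x n - x (n - 1)‖) = ξseq n * ‖x n - x (n - 1)‖ := by
        field_simp [hθn.ne']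
      linarith only [h4, h5]
    linarith only [h1, h2, h3]
  -- Step: ‖z n − xd‖ ≤ ‖u n − xd‖ for n ≥ k0
  have hstepZ : ∀ n, k0 ≤ n → ‖z n - xd‖ ≤ ‖u n - xd‖ := by
    intro n hn
    have hn1 : 1 ≤ n := le_trans hk01 hn
    have hψn := hψpos n hn1
    have hψn1 := hψpos (n + 1) (by omega)
    have e1 : ‖u n - xd‖ ^ 2
        = ‖u n - z n‖ ^ 2 + 2 * ⟪u n - z n, z n - xd⟫ + ‖z n - xd‖ ^ 2 := by
      have h := norm_add_sq_real (u n - z n) (z n - xd)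
      rwa [sub_add_sub_cancel] at h
    have e2 : ‖u n - z n‖ ^ 2
        = ‖u n - y n‖ ^ 2 - 2 * ⟪u n - y n, z n - y n⟫ + ‖z n - y n‖ ^ 2 := by
      have h := norm_sub_sq_real (u n - y n) (z n - y n)
      rwa [sub_sub_sub_cancel_right] at h
    have i2 : 0 ≤ ⟪u n - ψ n • A (y n) - z n, z n - xd⟫ := by
      have h := hz n hn1 xd (hy n hn1 xd hxdC)
      have h2 : ⟪u n - ψ n • A (y n) - z n, z n - xd⟫
          = -⟪u n - ψ n • A (y n) - z n, xd - z n⟫ := by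
        rw [← inner_neg_right, neg_sub]
      rw [h2]; linarith only [h]
    have d1 : ⟪u n - z n, z n - xd⟫
        = ⟪u n - ψ n • A (y n) - z n, z n - xd⟫ + ψ n * ⟪A (y n), z n - xd⟫ := by
      rw [← real_inner_smul_left, ← inner_add_left]
      congr 1; module
    have d2 : ⟪A (y n), z n - xd⟫
        = ⟪A (y n), z n - y n⟫ + (⟪A (y n) - A xd, y n - xd⟫ + ⟪A xd, y n - xd⟫) := by
      have h1 : ⟪A (y n) - A xd, y n - xd⟫ + ⟪A xd, y n - xd⟫ = ⟪A (y n), y n - xd⟫ := by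
        rw [← inner_add_left, sub_add_cancel]
      rw [h1, ← inner_add_right, sub_add_sub_cancel]
    have d3 : ⟪u n - y n, z n - y n⟫
        = ⟪u n - ψ n • A (u n) - y n, z n - y n⟫
          + ψ n * ⟪A (u n) - A (y n), z n - y n⟫ + ψ n * ⟪A (y n), z n - y n⟫ := by
      rw [← real_inner_smul_left, ← real_inner_smul_left, ← inner_add_left, ← inner_add_left]
      congr 1; module
    have P7 : ψ n * ⟪A (y n), z n - xd⟫
        = ψ n * ⟪A (y n), z n - y n⟫ + ψ n * ⟪A (y n) - A xd, y n - xd⟫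
          + ψ n * ⟪A xd, y n - xd⟫ := by rw [d2]; ring
    have P1 : 0 ≤ ψ n * ⟪A (y n) - A xd, y n - xd⟫ :=
      mul_nonneg hψn.le (hAmono (y n) xd)
    have P2 : 0 ≤ ψ n * ⟪A xd, y n - xd⟫ :=
      mul_nonneg hψn.le (hxdΩ (y n) (hymem n hn1))
    have P3 : ψ n * ⟪A (u n) - A (y n), z n - y n⟫
        ≤ ψ n * (‖A (u n) - A (y n)‖ * ‖z n - y n‖) :=
      mul_le_mul_of_nonneg_left (real_inner_le_norm _ _) hψn.le
    have hAb : ‖A (u n) - A (y n)‖ ≤ φ * ‖u n - y n‖ / ψ (n + 1) := by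
      rw [le_div_iff₀ hψn1]; linarith only [hψkey n hn1]
    have P4 : ψ n * (‖A (u n) - A (y n)‖ * ‖z n - y n‖)
        ≤ φ * ψ n / ψ (n + 1) * (‖u n - y n‖ * ‖z n - y n‖) := by
      have h := mul_le_mul_of_nonneg_left
        (mul_le_mul_of_nonneg_right hAb (norm_nonneg (z n - y n))) hψn.le
      refine h.trans (le_of_eq ?_)
      field_simp [hψn1.ne']
    have hρ0 : 0 ≤ φ * ψ n / ψ (n + 1) := by positivity
    have P5 : 2 * (φ * ψ n / ψ (n + 1) * (‖u n - y n‖ * ‖z n - y n‖))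
        ≤ φ * ψ n / ψ (n + 1) * (‖u n - y n‖ ^ 2 + ‖z n - y n‖ ^ 2) := by
      nlinarith only [sq_nonneg (‖u n - y n‖ - ‖z n - y n‖), hρ0]
    have P6 : 0 ≤ (1 - φ * ψ n / ψ (n + 1)) * (‖u n - y n‖ ^ 2 + ‖z n - y n‖ ^ 2) :=
      mul_nonneg (hk0 n hn).le (by positivity)
    have hzmemn := hzmem n hn1
    have hsq : ‖z n - xd‖ ^ 2 ≤ ‖u n - xd‖ ^ 2 := by
      linarith only [e1, e2, i2, d1, d3, P7, P1, P2, P3, P4, P5, P6, hzmemn]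
    nlinarith only [hsq, norm_nonneg (z n - xd), norm_nonneg (u n - xd)]
  -- Step: ‖q n − xd‖ ≤ ‖z n − xd‖
  have hstepQ : ∀ n, 1 ≤ n → ‖q n - xd‖ ≤ ‖z n - xd‖ := by
    intro n hn
    obtain ⟨hφa, hφb⟩ := hφseq n
    have hφn0 : 0 < φseq n := lt_trans ha hφa
    have hqd : q n - xd = (z n - xd) + φseq n • (T (z n) - z n) := by
      rw [hq n hn]; module
    have e : ‖q n - xd‖ ^ 2 = ‖z n - xd‖ ^ 2
        + 2 * (φseq n * ⟪z n - xd, T (z n) - z n⟫)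
        + (φseq n * ‖T (z n) - z n‖) ^ 2 := by
      rw [hqd, norm_add_sq_real, real_inner_smul_right, norm_smul, Real.norm_eq_abs,
        abs_of_pos hφn0]
    have hdemi := hTdem (z n) xd hxdT
    have e2 : ‖T (z n) - xd‖ ^ 2 = ‖z n - xd‖ ^ 2 + 2 * ⟪z n - xd, T (z n) - z n⟫
        + ‖T (z n) - z n‖ ^ 2 := by
      have h := norm_add_sq_real (z n - xd) (T (z n) - z n)
      rwa [sub_add_sub_cancel'] at h
    have hrev : ‖z n - T (z n)‖ = ‖T (z n) - z n‖ := norm_sub_rev _ _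
    have hcross : 2 * ⟪z n - xd, T (z n) - z n⟫ ≤ (ϑ - 1) * ‖T (z n) - z n‖ ^ 2 := by
      rw [hrev] at hdemi; linarith only [hdemi, e2]
    have hsq : ‖q n - xd‖ ^ 2 ≤ ‖z n - xd‖ ^ 2 := by
      have m1 := mul_le_mul_of_nonneg_left hcross hφn0.le
      have m2 := mul_le_mul_of_nonneg_right hφb.le
        (mul_nonneg hφn0.le (sq_nonneg ‖T (z n) - z n‖))
      linarith only [e, m1, m2]
    nlinarith only [hsq, norm_nonneg (q n - xd), norm_nonneg (z n - xd)]
  -- Step: contraction of I − σθS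
  have hstepX : ∀ n, 1 ≤ n →
      ‖x (n + 1) - xd‖ ≤ (1 - θ n * γ) * ‖q n - xd‖ + σ * θ n * ‖S xd‖ := by
    intro n hn
    obtain ⟨ht0, ht1⟩ := hθmem n
    have hσθ : 0 < σ * θ n := mul_pos hσ0 ht0
    have hxn : x (n + 1) - xd
        = ((q n - xd) - (σ * θ n) • (S (q n) - S xd)) + (-(σ * θ n)) • S xd := by
      rw [hx n hn]; module
    have tri : ‖x (n + 1) - xd‖
        ≤ ‖(q n - xd) - (σ * θ n) • (S (q n) - S xd)‖ + ‖(-(σ * θ n)) • S xd‖ := by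
      rw [hxn]; exact norm_add_le _ _
    have hlast : ‖(-(σ * θ n)) • S xd‖ = σ * θ n * ‖S xd‖ := by
      rw [norm_smul, Real.norm_eq_abs, abs_neg, abs_of_pos hσθ]
    have h1γ : 0 ≤ 1 - θ n * γ := by
      have := mul_le_mul_of_nonneg_left hγ1 ht0.le
      linarith only [this, ht1]
    have hlip := hSLip (q n) xd
    have hlip2 : ‖S (q n) - S xd‖ ^ 2 ≤ k ^ 2 * ‖q n - xd‖ ^ 2 := by
      nlinarith only [hlip, norm_nonneg (S (q n) - S xd),
        mul_nonneg hkpos.le (norm_nonneg (q n - xd))]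
    have hmono := hSmono (q n) xd
    have hcomm := real_inner_comm (q n - xd) (S (q n) - S xd)
    have e := norm_sub_sq_real (q n - xd) ((σ * θ n) • (S (q n) - S xd))
    rw [real_inner_smul_right, norm_smul, Real.norm_eq_abs, abs_of_pos hσθ] at e
    have hkey := key (θ n) ht0.le ht1.le
    have hDsq : ‖(q n - xd) - (σ * θ n) • (S (q n) - S xd)‖ ^ 2
        ≤ ((1 - θ n * γ) * ‖q n - xd‖) ^ 2 := by
      have m1 := mul_le_mul_of_nonneg_left hmono hσθ.le
      have m2 := mul_le_mul_of_nonneg_left hlip2 (sq_nonneg (σ * θ n))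
      have m3 := mul_le_mul_of_nonneg_right hkey (sq_nonneg ‖q n - xd‖)
      rw [hcomm] at m1
      linarith only [e, m1, m2, m3]
    have hD : ‖(q n - xd) - (σ * θ n) • (S (q n) - S xd)‖ ≤ (1 - θ n * γ) * ‖q n - xd‖ := by
      nlinarith only [hDsq, norm_nonneg ((q n - xd) - (σ * θ n) • (S (q n) - S xd)),
        mul_nonneg h1γ (norm_nonneg (q n - xd))]
    linarith only [tri, hlast, hD]
  -- One-step recursion for n ≥ k0
  have hrec : ∀ n, k0 ≤ n → ‖x (n + 1) - xd‖
      ≤ max ‖x n - xd‖ ((σ * ‖S xd‖ + Q1) / γ) := by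
    intro n hn
    have hn1 : 1 ≤ n := le_trans hk01 hn
    obtain ⟨ht0, ht1⟩ := hθmem n
    have h1γ : 0 ≤ 1 - θ n * γ := by
      have := mul_le_mul_of_nonneg_left hγ1 ht0.le
      linarith only [this, ht1]
    have c1 := hstepX n hn1
    have c2 := mul_le_mul_of_nonneg_left ((hstepQ n hn1).trans ((hstepZ n hn).trans
      (hstep3 n hn1))) h1γ
    have hB : θ n * γ * ((σ * ‖S xd‖ + Q1) / γ) = θ n * (σ * ‖S xd‖ + Q1) := by
      field_simp [hγ0.ne']
    have hchain : ‖x (n + 1) - xd‖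
        ≤ (1 - θ n * γ) * ‖x n - xd‖ + θ n * γ * ((σ * ‖S xd‖ + Q1) / γ) := by
      rw [hB]
      have h0 : 0 ≤ θ n * γ * (θ n * Q1) :=
        mul_nonneg (mul_nonneg ht0.le hγ0.le) (mul_nonneg ht0.le hQ10)
      linarith only [c1, c2, h0]
    have hmax1 : ‖x n - xd‖ ≤ max ‖x n - xd‖ ((σ * ‖S xd‖ + Q1) / γ) := le_max_left _ _
    have hmax2 : (σ * ‖S xd‖ + Q1) / γ ≤ max ‖x n - xd‖ ((σ * ‖S xd‖ + Q1) / γ) :=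
      le_max_right _ _
    have hθγ0 : 0 ≤ θ n * γ := mul_nonneg ht0.le hγ0.le
    linarith only [hchain, mul_le_mul_of_nonneg_left hmax1 h1γ,
      mul_le_mul_of_nonneg_left hmax2 hθγ0]
  -- Main claim by induction
  have main : ∀ n, k0 ≤ n →
      ‖x (n + 1) - xd‖ ≤ max ‖x k0 - xd‖ ((σ * ‖S xd‖ + Q1) / γ) := by
    intro n hn
    refine Nat.le_induction (hrec k0 le_rfl) (fun m hm ih => ?_) n hn
    have := hrec (m + 1) (by omega)
    refine this.trans (max_le (le_trans ih le_rfl) (le_max_right _ _))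
  refine ⟨?_, main⟩
  -- boundedness
  have hne : (Finset.range (k0 + 1)).Nonempty := ⟨0, by simp⟩
  refine ⟨max ((Finset.range (k0 + 1)).sup' hne fun i => ‖x i‖)
    (max ‖x k0 - xd‖ ((σ * ‖S xd‖ + Q1) / γ) + ‖xd‖), fun n => ?_⟩
  rcases le_or_gt n k0 with h | h
  · exact le_max_of_le_left (Finset.le_sup' (f := fun i => ‖x i‖)
      (Finset.mem_range.mpr (by omega)))
  · obtain ⟨m, rfl⟩ : ∃ m, n = m + 1 := ⟨n - 1, by omega⟩
    have h1 := main m (by omega)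
    have h2 : ‖x (m + 1)‖ ≤ ‖x (m + 1) - xd‖ + ‖xd‖ := by
      simpa using norm_add_le (x (m + 1) - xd) xd
    exact le_max_of_le_right (by linarith only [h1, h2])
end
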